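/- Let δ ≥ 0 and let f, g : ℝ³ → ℝ be continuously differentiable functions such that ⟨x⟩^{δ+1} f, ⟨x⟩^{δ+1} |∇f|, ⟨x⟩^{δ+1} g, and ⟨x⟩^{δ+1} |∇g| all belong to L²(ℝ³). Then ⟨x⟩^{δ+2} f g ∈ L²(ℝ³). -/

import Mathlib

open MeasureTheory Real Filter

noncomputable section

/-- Euclidean 3-space `ℝ³`. -/
abbrev E3 := EuclideanSpace ℝ (Fin 3)

/-- Partial derivative in the `i`-th coordinate direction. -/
def pd (i : Fin 3) (f : E3 → ℝ) : E3 → ℝ := fun x => fderiv ℝ f x (EuclideanSpace.single i 1)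

/-- The partial derivative `∂^m` corresponding to the multi-index `m`. -/
def pdm (m : Fin 3 → ℕ) (f : E3 → ℝ) : E3 → ℝ :=
  (pd 0)^[m 0] <| (pd 1)^[m 1] <| (pd 2)^[m 2] f

/-- The order `|m|` of a multi-index `m`. -/
def mdeg (m : Fin 3 → ℕ) : ℕ := m 0 + m 1 + m 2

/-- The Laplacian on `ℝ³`. -/
def lap (f : E3 → ℝ) : E3 → ℝ := fun x => ∑ i, pd i (pd i f) x

/-- The weight `⟨x⟩ = (1 + |x|²)^(1/2)`. -/
def jw (x : E3) : ℝ := Real.sqrt (1 + ‖x‖ ^ 2)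

/-!
Put `F = ⟨x⟩^{δ+1} f`. Since `|∇⟨x⟩^s| ≤ |s| ⟨x⟩^s`, both `F` and `∇F` lie in `L²`, so the
Gagliardo–Nirenberg–Sobolev inequality gives `F ∈ L⁶` (it is applied to the compactly supported
cut-offs `φ(x/n) F`, and the bound passes to the limit by Fatou's lemma), and `F ∈ L⁴` by
interpolation between `L²` and `L⁶`. The same holds for `G = ⟨x⟩^{δ+1} g`, so `FG ∈ L²` by Hölder,
and `⟨x⟩^{δ+2} |f g| ≤ ⟨x⟩^{2δ+2} |f g| = |F G|` because `δ ≥ 0` and `⟨x⟩ ≥ 1`.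
-/

open Module
open scoped NNReal ENNReal Topology

theorem Real.rpow_le_rpow_add_rpow {a p q r : ℝ} (ha : 0 ≤ a) (hp : 0 ≤ p) (hpq : p ≤ q)
    (hqr : q ≤ r) : a ^ q ≤ a ^ p + a ^ r := by
  rcases le_total a 1 with h | h
  · linarith [rpow_le_rpow_of_exponent_ge' ha h hp hpq, rpow_nonneg ha r]
  · linarith [rpow_le_rpow_of_exponent_le h hqr, rpow_nonneg ha p]

namespace MeasureTheory

theorem MemLp.interpolate {α E : Type*} [MeasurableSpace α] {μ : Measure α}
    [NormedAddCommGroup E] {f : α → E} {p q r : ℝ≥0∞} (hp : MemLp f p μ) (hr : MemLp f r μ)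
    (hp0 : p ≠ 0) (hpq : p ≤ q) (hqr : q ≤ r) (hr_top : r ≠ ∞) : MemLp f q μ := by
  have hf := hp.1
  have hq0 : q ≠ 0 := (pos_iff_ne_zero.2 hp0 |>.trans_le hpq).ne'
  have hq_top : q ≠ ∞ := ne_top_of_le_ne_top hr_top hqr
  rw [← integrable_norm_rpow_iff hf hq0 hq_top]
  rw [← integrable_norm_rpow_iff hf hp0 (ne_top_of_le_ne_top hq_top hpq)] at hp
  rw [← integrable_norm_rpow_iff hf (ne_bot_of_le_ne_bot hq0 hqr) hr_top] at hr
  refine (hp.add hr).mono' (hf.norm.aemeasurable.pow_const _).aestronglyMeasurable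
    (Eventually.of_forall fun x => ?_)
  rw [norm_of_nonneg (by positivity)]
  exact Real.rpow_le_rpow_add_rpow (norm_nonneg _) ENNReal.toReal_nonneg
    (ENNReal.toReal_mono hq_top hpq) (ENNReal.toReal_mono hr_top hqr)

end MeasureTheory

section Sobolev

variable {E : Type*} [NormedAddCommGroup E] [NormedSpace ℝ E]
  {F : Type*} [NormedAddCommGroup F] [NormedSpace ℝ F]

theorem norm_fderiv_smul_le {w : E → ℝ} {u : E → F} {x : E} (hw : DifferentiableAt ℝ w x)
    (hu : DifferentiableAt ℝ u x) :
    ‖fderiv ℝ (fun y => w y • u y) x‖ ≤ ‖w x‖ * ‖fderiv ℝ u x‖ + ‖fderiv ℝ w x‖ * ‖u x‖ := by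
  rw [fderiv_fun_smul hw hu, ← ContinuousLinearMap.norm_smulRight_apply, ← norm_smul]
  exact norm_add_le _ _

theorem ContDiffBump.exists_norm_fderiv_comp_smul_smul_le [FiniteDimensional ℝ E]
    (φ : ContDiffBump (0 : E)) :
    ∃ M, ∀ c : ℝ, |c| ≤ 1 → ∀ {u : E → F} {x : E}, DifferentiableAt ℝ u x →
      ‖fderiv ℝ (fun y => φ (c • y) • u y) x‖ ≤ ‖fderiv ℝ u x‖ + M * ‖u x‖ := by
  obtain ⟨M, hM⟩ := (φ.hasCompactSupport.fderiv ℝ).exists_bound_of_continuous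
    (φ.contDiff.continuous_fderiv (n := 1) one_ne_zero)
  refine ⟨M, fun c hc u x hu => ?_⟩
  have hφc : DifferentiableAt ℝ (fun y => φ (c • y)) x :=
    (φ.contDiff (n := 1).differentiable one_ne_zero _).comp x (differentiableAt_id.const_smul c)
  calc ‖fderiv ℝ (fun y => φ (c • y) • u y) x‖
      ≤ ‖φ (c • x)‖ * ‖fderiv ℝ u x‖ + ‖fderiv ℝ (fun y => φ (c • y)) x‖ * ‖u x‖ :=
        norm_fderiv_smul_le hφc hu
    _ ≤ 1 * ‖fderiv ℝ u x‖ + M * ‖u x‖ := by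
        gcongr
        · rw [Real.norm_of_nonneg φ.nonneg]
          exact φ.le_one
        · rw [fderiv_comp_smul, norm_smul, Real.norm_eq_abs]
          exact (mul_le_of_le_one_left (norm_nonneg _) hc).trans (hM _)
    _ = ‖fderiv ℝ u x‖ + M * ‖u x‖ := by rw [one_mul]

theorem ContDiffBump.eventually_comp_smul_eq_one [HasContDiffBump E] (φ : ContDiffBump (0 : E))
    (x : E) :
    ∀ᶠ c in 𝓝 (0 : ℝ), φ (c • x) = 1 := by
  have : Tendsto (fun c : ℝ => c • x) (𝓝 0) (𝓝 0) := by
    simpa using (continuous_id.smul continuous_const).tendsto (0 : ℝ) (f := fun c : ℝ => c • x)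
  exact this.eventually φ.eventuallyEq_one

theorem memLp_fderiv_smul [FiniteDimensional ℝ E] [MeasurableSpace E] [OpensMeasurableSpace E]
    {μ : Measure E} {p : ℝ≥0∞} {w : E → ℝ} {u : E → F} {C : ℝ} (hw : ContDiff ℝ 1 w)
    (hu : ContDiff ℝ 1 u) (hwC : ∀ x, ‖fderiv ℝ w x‖ ≤ C * ‖w x‖)
    (h0 : MemLp (fun x => w x • u x) p μ) (h1 : MemLp (fun x => w x • fderiv ℝ u x) p μ) :
    MemLp (fderiv ℝ (fun x => w x • u x)) p μ := by
  refine (h1.norm.add (h0.norm.const_mul C)).of_le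
    ((hw.smul hu).continuous_fderiv one_ne_zero).aestronglyMeasurable
    (Eventually.of_forall fun x => ?_)
  calc ‖fderiv ℝ (fun x => w x • u x) x‖
      ≤ ‖w x‖ * ‖fderiv ℝ u x‖ + ‖fderiv ℝ w x‖ * ‖u x‖ :=
        norm_fderiv_smul_le (hw.differentiable one_ne_zero x) (hu.differentiable one_ne_zero x)
    _ ≤ ‖w x • fderiv ℝ u x‖ + C * ‖w x • u x‖ := by
        rw [norm_smul, norm_smul, ← mul_assoc]
        gcongr
        exact hwC x
    _ ≤ ‖‖w x • fderiv ℝ u x‖ + C * ‖w x • u x‖‖ := le_abs_self _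

theorem memLp_of_memLp_fderiv_of_eq [FiniteDimensional ℝ E] [MeasurableSpace E] [BorelSpace E]
    [FiniteDimensional ℝ F] (μ : Measure E) [μ.IsAddHaarMeasure] {u : E → F}
    (hu : ContDiff ℝ 1 u) {p p' : ℝ≥0} (hp : 1 ≤ p) (hn : 0 < finrank ℝ E)
    (hp' : (p' : ℝ)⁻¹ = p⁻¹ - (finrank ℝ E : ℝ)⁻¹) (h0 : MemLp u p μ)
    (h1 : MemLp (fderiv ℝ u) p μ) : MemLp u p' μ := by
  let φ : ContDiffBump (0 : E) := ⟨1, 2, one_pos, one_lt_two⟩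
  obtain ⟨M, hM⟩ := φ.exists_norm_fderiv_comp_smul_smul_le (F := F)
  let c : ℕ → ℝ := fun n => 1 / ((n : ℝ) + 1)
  have hc : ∀ n, |c n| ≤ 1 := fun n => by
    rw [abs_of_pos (by positivity)]
    exact div_le_one_of_le₀ (by linarith [n.cast_nonneg (α := ℝ)]) (by positivity)
  let v : ℕ → E → F := fun n x => φ (c n • x) • u x
  have hv : ∀ n, ContDiff ℝ 1 (v n) := fun n =>
    (φ.contDiff.comp (contDiff_const_smul _)).smul hu
  have hDv : ∀ n, eLpNorm (fderiv ℝ (v n)) p μ ≤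
      eLpNorm (fun x => ‖fderiv ℝ u x‖ + M * ‖u x‖) p μ := fun n => eLpNorm_mono fun x =>
    (hM _ (hc n) (hu.differentiable one_ne_zero x)).trans (le_abs_self _)
  have hv_le : ∀ n, eLpNorm (v n) p' μ ≤
      SNormLESNormFDerivOfEqConst F μ p * eLpNorm (fun x => ‖fderiv ℝ u x‖ + M * ‖u x‖) p μ :=
    fun n => (eLpNorm_le_eLpNorm_fderiv_of_eq μ (hv n)
      ((φ.hasCompactSupport.comp_smul (one_div_pos.2 (n.cast_add_one_pos)).ne').smul_right)
      hp hn hp').trans (by gcongr; exact hDv n)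
  have hv_lim : ∀ x, Tendsto (fun n => v n x) atTop (𝓝 (u x)) := fun x => by
    refine tendsto_const_nhds.congr' ?_
    filter_upwards [tendsto_one_div_add_atTop_nhds_zero_nat.eventually
      (φ.eventually_comp_smul_eq_one x)] with n hn
    change u x = φ ((1 / ((n : ℝ) + 1)) • x) • u x
    rw [hn, one_smul]
  refine ⟨hu.continuous.aestronglyMeasurable, ?_⟩
  calc eLpNorm u p' μ ≤ atTop.liminf fun n => eLpNorm (v n) p' μ :=
        Lp.eLpNorm_lim_le_liminf_eLpNorm (fun n => (hv n).continuous.aestronglyMeasurable) u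
          (ae_of_all _ hv_lim)
    _ ≤ _ := liminf_le_of_frequently_le' (Frequently.of_forall hv_le)
    _ < ∞ := ENNReal.mul_lt_top ENNReal.coe_lt_top (h1.norm.add (h0.norm.const_mul M)).2

end Sobolev

theorem one_le_jw (x : E3) : 1 ≤ jw x :=
  Real.one_le_sqrt.2 (le_add_of_nonneg_right (sq_nonneg _))

theorem jw_pos (x : E3) : 0 < jw x := one_pos.trans_le (one_le_jw x)

theorem norm_le_jw (x : E3) : ‖x‖ ≤ jw x :=
  Real.le_sqrt_of_sq_le (le_add_of_nonneg_left zero_le_one)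

theorem contDiff_jw {n : WithTop ℕ∞} : ContDiff ℝ n jw :=
  (contDiff_const.add (contDiff_norm_sq ℝ)).sqrt fun x => by positivity

theorem continuous_jw : Continuous jw := (contDiff_jw (n := 0)).continuous

theorem norm_fderiv_jw_le (x : E3) : ‖fderiv ℝ jw x‖ ≤ 1 := by
  have h := ((hasStrictFDerivAt_norm_sq x).hasFDerivAt.const_add 1).sqrt (by positivity)
  rw [show jw = fun y => √(1 + ‖y‖ ^ 2) from rfl, h.fderiv, ← Nat.cast_smul_eq_nsmul ℝ,
    smul_smul, norm_smul, innerSL_apply_norm]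
  change ‖1 / (2 * jw x) * ((2 : ℕ) : ℝ)‖ * ‖x‖ ≤ 1
  rw [Nat.cast_ofNat, one_div_mul_eq_div, div_mul_cancel_left₀ two_ne_zero, norm_inv,
    Real.norm_of_nonneg (jw_pos x).le, inv_mul_le_one₀ (jw_pos x)]
  exact norm_le_jw x

theorem norm_fderiv_jw_rpow_le (s : ℝ) (x : E3) :
    ‖fderiv ℝ (fun y => jw y ^ s) x‖ ≤ |s| * jw x ^ s := by
  rw [((contDiff_jw.differentiable one_ne_zero x).hasFDerivAt.rpow_const
    (Or.inl (jw_pos x).ne')).fderiv, norm_smul, norm_mul, Real.norm_eq_abs,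
    Real.norm_of_nonneg (rpow_nonneg (jw_pos x).le _)]
  calc |s| * jw x ^ (s - 1) * ‖fderiv ℝ jw x‖ ≤ |s| * jw x ^ s * 1 := by
        have := rpow_le_rpow_of_exponent_le (one_le_jw x) (sub_le_self s zero_le_one)
        exact mul_le_mul (by gcongr) (norm_fderiv_jw_le x) (norm_nonneg _)
          (mul_nonneg (abs_nonneg s) (rpow_nonneg (jw_pos x).le s))
    _ = |s| * jw x ^ s := mul_one _

instance : ENNReal.HolderTriple 4 4 2 :=
  ⟨by rw [← two_mul, show (4 : ℝ≥0∞) = 2 * 2 by norm_num, ENNReal.mul_inv (by simp) (by simp),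
    ← mul_assoc, ENNReal.mul_inv_cancel (by simp) (by simp), one_mul]⟩

theorem memLp_four_jw_rpow_mul {s : ℝ} {u : E3 → ℝ} (hu : ContDiff ℝ 1 u)
    (h0 : MemLp (fun x => jw x ^ s * u x) 2 volume)
    (h1 : MemLp (fun x => jw x ^ s * ‖fderiv ℝ u x‖) 2 volume) :
    MemLp (fun x => jw x ^ s * u x) 4 volume := by
  have hw : ContDiff ℝ 1 fun x => jw x ^ s :=
    contDiff_jw.rpow_const_of_ne fun x => (jw_pos x).ne'
  have hw_nonneg : ∀ x, ‖jw x ^ s‖ = jw x ^ s := fun x =>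
    Real.norm_of_nonneg (rpow_nonneg (jw_pos x).le s)
  have h1' : MemLp (fun x => jw x ^ s • fderiv ℝ u x) 2 volume :=
    h1.congr_norm (hw.continuous.smul (hu.continuous_fderiv one_ne_zero)).aestronglyMeasurable
      (ae_of_all _ fun x => by rw [norm_smul, hw_nonneg, norm_mul, hw_nonneg, norm_norm])
  have hD : MemLp (fderiv ℝ fun x => jw x ^ s * u x) 2 volume :=
    memLp_fderiv_smul hw hu (fun x => (hw_nonneg x).symm ▸ norm_fderiv_jw_rpow_le s x) h0 h1'
  have h6 : MemLp (fun x => jw x ^ s * u x) 6 volume := by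
    have := memLp_of_memLp_fderiv_of_eq (p := 2) (p' := 6) volume (hw.mul hu) one_le_two
      (by simp) (by norm_num [finrank_euclideanSpace_fin]) (by simpa using h0) (by simpa using hD)
    simpa using this
  exact h0.interpolate h6 two_ne_zero (by norm_num) (by norm_num) (by norm_num)

/-- Product estimate: if f, g ∈ W^{1,2}_{δ+1} (with δ ≥ 0) are C¹, then
`⟨x⟩^{δ+2} f g ∈ L²(ℝ³)`. -/
theorem weighted_product_estimate (δ : ℝ) (hδ : 0 ≤ δ)
    (f g : E3 → ℝ) (hf : ContDiff ℝ 1 f) (hg : ContDiff ℝ 1 g)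
    (hf0 : MemLp (fun x => jw x ^ (δ + 1) * f x) 2 volume)
    (hf1 : MemLp (fun x => jw x ^ (δ + 1) * ‖fderiv ℝ f x‖) 2 volume)
    (hg0 : MemLp (fun x => jw x ^ (δ + 1) * g x) 2 volume)
    (hg1 : MemLp (fun x => jw x ^ (δ + 1) * ‖fderiv ℝ g x‖) 2 volume) :
    MemLp (fun x => jw x ^ (δ + 2) * (f x * g x)) 2 volume := by
  have hFG := (memLp_four_jw_rpow_mul hg hg0 hg1).mul' (r := 2)
    (memLp_four_jw_rpow_mul hf hf0 hf1)
  refine hFG.of_le ((continuous_jw.rpow_const fun x => Or.inl (jw_pos x).ne').mul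
    (hf.continuous.mul hg.continuous)).aestronglyMeasurable (ae_of_all _ fun x => ?_)
  have hx := jw_pos x
  calc ‖jw x ^ (δ + 2) * (f x * g x)‖ = jw x ^ (δ + 2) * ‖f x * g x‖ := by
        rw [norm_mul, Real.norm_of_nonneg (rpow_nonneg hx.le _)]
    _ ≤ jw x ^ (δ + 1 + (δ + 1)) * ‖f x * g x‖ := by
        gcongr ?_ * _
        exact rpow_le_rpow_of_exponent_le (one_le_jw x) (by linarith)
    _ = ‖jw x ^ (δ + 1) * f x * (jw x ^ (δ + 1) * g x)‖ := by
        rw [rpow_add hx, norm_mul, norm_mul, norm_mul, norm_mul,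
          Real.norm_of_nonneg (rpow_nonneg hx.le _)]
        ring
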